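/- arXiv:1102.4159 — 7 statements merged into one kernel-verified Lean document; each statement's English description precedes it below -/
import Mathlib

section
/- Let D > 0, let F : ℝ → ℝ be continuously differentiable on [-D, D], let λ ∈ ℝ, and let f : ℝ → ℝ be twice continuously differentiable on [-D, D] with f(-D) = f(D) = 0 and f(x) > 0 for all x ∈ (-D, D), satisfying the equation -f''(x) = F'(x)·f(x) + F(x)·f'(x) + λ·f(x) for all x ∈ (-D, D). Then for every s ∈ (0, 1), one has 4s(1-s)·(π/(2D))² ≤ λ + s·sup_{x ∈ (-D,D)} F'(x). -/
/-!
Suppose `λ + s · sup F' < 4 s (1 - s) k²` with `k = π / (2D)`. Let `G` be an antiderivative of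
`F` and put `w = f ^ p · exp (q G)` with `p = 1 / (4 s (1 - s)) ≥ 1` and `q = 1 / (4 s)`. Then `w`
vanishes at `±D`, and writing `X = f' / f`, the equation for `f` gives inside `(-D, D)`
`w'' / w + k² = (p (1 - 2s) X + q F)² + k² - p (λ + s F') > 0`.
This contradicts Sturm comparison with the first Dirichlet eigenfunction of `-d²/dx²` on
`(-D, D)`, whose eigenvalue is `k²`: by Rolle's theorem applied to the Wronskian of `w` and that
eigenfunction, `w'' + k² w` must vanish somewhere in `(-D, D)`.
-/

open Set Real

theorem exists_mem_Ioo_add_sq_mul_eq_zero {w w' w'' : ℝ → ℝ} {a b k : ℝ} (hab : a < b)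
    (hk : k * (b - a) = π) (hw : ContinuousOn w (Icc a b)) (hw' : ContinuousOn w' (Icc a b))
    (hwa : w a = 0) (hwb : w b = 0) (hdw : ∀ x ∈ Ioo a b, HasDerivAt w (w' x) x)
    (hdw' : ∀ x ∈ Ioo a b, HasDerivAt w' (w'' x) x) :
    ∃ c ∈ Ioo a b, w'' c + k ^ 2 * w c = 0 := by
  -- The Wronskian of `w` and `sin (k (x - a))` has derivative `(w'' + k² w) sin (k (x - a))`.
  have hθ (x : ℝ) : HasDerivAt (fun x => k * (x - a)) k x := by
    simpa using ((hasDerivAt_id x).sub_const a).const_mul k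
  obtain ⟨c, hc, hc0⟩ := exists_hasDerivAt_eq_zero
    (f := fun x => w' x * sin (k * (x - a)) - w x * (k * cos (k * (x - a)))) hab
    (by fun_prop) (by simp [hwa, hwb, hk])
    (fun x hx => ((hdw' x hx).mul (hθ x).sin).sub ((hdw x hx).mul ((hθ x).cos.const_mul k)))
  have hk0 : 0 < k := by nlinarith [pi_pos]
  have hsin : 0 < sin (k * (c - a)) :=
    sin_pos_of_mem_Ioo ⟨by nlinarith [hc.1], by nlinarith [hc.2]⟩
  have hprod : (w'' c + k ^ 2 * w c) * sin (k * (c - a)) = 0 := by linear_combination hc0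
  exact ⟨c, hc, (mul_eq_zero.mp hprod).resolve_right hsin.ne'⟩

theorem ContinuousOn.exists_continuous_forall_mem_Ioo_hasDerivAt {F : ℝ → ℝ} {a b : ℝ}
    (hab : a ≤ b) (hF : ContinuousOn F (Icc a b)) :
    ∃ G : ℝ → ℝ, Continuous G ∧ ∀ x ∈ Ioo a b, HasDerivAt G (F x) x := by
  have hFe : Continuous (IccExtend hab ((Icc a b).domRestrict F)) := hF.domRestrict.Icc_extend'
  have hG (x : ℝ) := (hFe.integral_hasStrictDerivAt a x).hasDerivAt
  refine ⟨_, continuous_iff_continuousAt.2 fun x => (hG x).continuousAt, fun x hx => ?_⟩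
  exact (hG x).congr_deriv (IccExtend_of_mem hab _ (Ioo_subset_Icc_self hx))

section RpowMulDeriv

variable {f f' f'' β β' E : ℝ → ℝ} {p x : ℝ}

theorem hasDerivAt_rpow_mul (hx : f x ≠ 0) (hf : HasDerivAt f (f' x) x)
    (hE : HasDerivAt E (β x * E x) x) :
    HasDerivAt (fun y => f y ^ p * E y) ((p * f x ^ (p - 1) * f' x + β x * f x ^ p) * E x) x :=
  ((hf.rpow_const (p := p) (Or.inl hx)).mul hE).congr_deriv (by ring)

theorem hasDerivAt_rpow_mul_deriv (hx : f x ≠ 0) (hf : HasDerivAt f (f' x) x)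
    (hf' : HasDerivAt f' (f'' x) x) (hE : HasDerivAt E (β x * E x) x)
    (hβ : HasDerivAt β (β' x) x) :
    HasDerivAt (fun y => (p * f y ^ (p - 1) * f' y + β y * f y ^ p) * E y)
      (((p * (f' x / f x) + β x) ^ 2 + p * (f'' x / f x - (f' x / f x) ^ 2) + β' x)
        * (f x ^ p * E x)) x := by
  refine ((((hf.rpow_const (p := p - 1) (Or.inl hx)).const_mul p).mul hf').add
    (hβ.mul (hf.rpow_const (p := p) (Or.inl hx)))).mul hE |>.congr_deriv ?_
  simp only [Pi.mul_apply, Pi.add_apply, rpow_sub_one hx]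
  field_simp
  ring

end RpowMulDeriv

/-- The conclusion is `w'' / w + k² = 0` for `w = f ^ p * exp (q * G)` with `G' = F`, written
in terms of `f' / f`. -/
theorem exists_mem_Ioo_rpow_mul_exp_comparison {f f' f'' F F' : ℝ → ℝ} {a b k p q : ℝ}
    (hab : a < b) (hk : k * (b - a) = π) (hp : 1 ≤ p) (hf : ContinuousOn f (Icc a b))
    (hf' : ContinuousOn f' (Icc a b)) (hF : ContinuousOn F (Icc a b)) (hfa : f a = 0)
    (hfb : f b = 0) (hfpos : ∀ x ∈ Ioo a b, 0 < f x)
    (hdf : ∀ x ∈ Ioo a b, HasDerivAt f (f' x) x) (hdf' : ∀ x ∈ Ioo a b, HasDerivAt f' (f'' x) x)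
    (hdF : ∀ x ∈ Ioo a b, HasDerivAt F (F' x) x) :
    ∃ c ∈ Ioo a b, (p * (f' c / f c) + q * F c) ^ 2 + p * (f'' c / f c - (f' c / f c) ^ 2)
      + q * F' c + k ^ 2 = 0 := by
  obtain ⟨G, hGc, hG⟩ := hF.exists_continuous_forall_mem_Ioo_hasDerivAt hab.le
  have hE (x : ℝ) (hx : x ∈ Ioo a b) :
      HasDerivAt (fun y => exp (q * G y)) (q * F x * exp (q * G x)) x :=
    ((hG x hx).const_mul q).exp.congr_deriv (mul_comm _ _)
  have hfp {r : ℝ} (hr : 0 ≤ r) : ContinuousOn (fun x => f x ^ r) (Icc a b) :=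
    hf.rpow_const fun _ _ => Or.inr hr
  obtain ⟨c, hc, hwc⟩ := exists_mem_Ioo_add_sq_mul_eq_zero (k := k)
    (w := fun y => f y ^ p * exp (q * G y))
    (w' := fun y => (p * f y ^ (p - 1) * f' y + q * F y * f y ^ p) * exp (q * G y)) hab hk
    ((hfp (by linarith)).mul (by fun_prop))
    ((((continuousOn_const.mul (hfp (by linarith))).mul hf').add
      ((continuousOn_const.mul hF).mul (hfp (by linarith)))).mul (by fun_prop))
    (by simp [hfa, zero_rpow (by linarith : p ≠ 0)])
    (by simp [hfb, zero_rpow (by linarith : p ≠ 0)])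
    (fun x hx => hasDerivAt_rpow_mul (β := fun y => q * F y) (hfpos x hx).ne' (hdf x hx) (hE x hx))
    (fun x hx => hasDerivAt_rpow_mul_deriv (β := fun y => q * F y) (β' := fun y => q * F' y)
      (hfpos x hx).ne' (hdf x hx) (hdf' x hx) (hE x hx) ((hdF x hx).const_mul q))
  have hw : 0 < f c ^ p * exp (q * G c) := by have := hfpos c hc; positivity
  refine ⟨c, hc, mul_right_cancel₀ hw.ne' ?_⟩
  linear_combination hwc

-- `p` and `q` are chosen so that `(p X + q P)² - p (X² + P X) = (p (1 - 2s) X + q P)²`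
-- and `q - p = -s p`.
theorem sq_sub_mul_add_eq {s p q X P Q lam : ℝ} (hp : 4 * s * (1 - s) * p = 1)
    (hq : 4 * s * q = 1) :
    (p * X + q * P) ^ 2 - p * (X ^ 2 + P * X + Q + lam) + q * Q
      = (p * (1 - 2 * s) * X + q * P) ^ 2 - p * (lam + s * Q) := by
  linear_combination (p * X ^ 2 - q * Q) * hp + (p * P * X + p * (1 - s) * Q) * hq

theorem stmt_0_general (D : ℝ) (hD : 0 < D) (F F' f f' f'' : ℝ → ℝ) (lam : ℝ)
    (hF : ∀ x ∈ Icc (-D) D, HasDerivWithinAt F (F' x) (Icc (-D) D) x)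
    (hF'cont : ContinuousOn F' (Icc (-D) D))
    (hf : ∀ x ∈ Icc (-D) D, HasDerivWithinAt f (f' x) (Icc (-D) D) x)
    (hf' : ∀ x ∈ Icc (-D) D, HasDerivWithinAt f' (f'' x) (Icc (-D) D) x)
    (hf0 : f (-D) = 0) (hf1 : f D = 0)
    (hfpos : ∀ x ∈ Ioo (-D) D, 0 < f x)
    (heq : ∀ x ∈ Ioo (-D) D, -f'' x = F' x * f x + F x * f' x + lam * f x) :
    ∀ s ∈ Ioo (0 : ℝ) 1,
      4 * s * (1 - s) * (Real.pi / (2 * D)) ^ 2 ≤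
        lam + s * sSup (F' '' Ioo (-D) D) := by
  rintro s ⟨hs0, hs1⟩
  by_contra! hcon
  have h4s : 0 < 4 * s * (1 - s) := by nlinarith
  obtain ⟨p, hp⟩ : ∃ p, 4 * s * (1 - s) * p = 1 := ⟨_, mul_inv_cancel₀ h4s.ne'⟩
  obtain ⟨q, hq⟩ : ∃ q, 4 * s * q = 1 := ⟨_, mul_inv_cancel₀ (by positivity)⟩
  have hp1 : 1 ≤ p := by nlinarith [sq_nonneg (1 - 2 * s)]
  have hder {g g' : ℝ → ℝ} (hg : ∀ x ∈ Icc (-D) D, HasDerivWithinAt g (g' x) (Icc (-D) D) x)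
      (x : ℝ) (hx : x ∈ Ioo (-D) D) : HasDerivAt g (g' x) x :=
    (hg x (Ioo_subset_Icc_self hx)).hasDerivAt (Icc_mem_nhds hx.1 hx.2)
  obtain ⟨c, hc, hwc⟩ := exists_mem_Ioo_rpow_mul_exp_comparison (k := π / (2 * D)) (q := q)
    (by linarith) (by field_simp; ring) hp1 (fun x hx => (hf x hx).continuousWithinAt)
    (fun x hx => (hf' x hx).continuousWithinAt) (fun x hx => (hF x hx).continuousWithinAt)
    hf0 hf1 hfpos (hder hf) (hder hf') (hder hF)
  have hF'le : F' c ≤ sSup (F' '' Ioo (-D) D) :=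
    le_csSup ((isCompact_Icc.image_of_continuousOn hF'cont).bddAbove.mono
      (image_mono Ioo_subset_Icc_self)) ⟨c, hc, rfl⟩
  have hode : f'' c / f c = -(F' c + F c * (f' c / f c) + lam) := by
    have := hfpos c hc
    field_simp
    linarith [heq c hc]
  have hgap : p * (lam + s * F' c) < (π / (2 * D)) ^ 2 :=
    calc p * (lam + s * F' c) ≤ p * (lam + s * sSup (F' '' Ioo (-D) D)) := by gcongr
      _ < p * (4 * s * (1 - s) * (π / (2 * D)) ^ 2) := by gcongr
      _ = (π / (2 * D)) ^ 2 := by linear_combination (π / (2 * D)) ^ 2 * hp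
  rw [hode] at hwc
  linarith [sq_sub_mul_add_eq (X := f' c / f c) (P := F c) (Q := F' c) (lam := lam) hp hq,
    sq_nonneg (p * (1 - 2 * s) * (f' c / f c) + q * F c)]

/-- Analytic core of Corollary 4.3: if `f = v'` solves
`-f'' = F' f + F f' + λ f` on `(-D, D)`, vanishes at `±D` and is positive inside,
then `4 s (1-s) (π/(2D))² ≤ λ + s · sup_{(-D,D)} F'` for all `s ∈ (0,1)`. -/
theorem stmt_0 (D : ℝ) (hD : 0 < D) (F F' f f' f'' : ℝ → ℝ) (lam : ℝ)
    (hF : ∀ x ∈ Icc (-D) D, HasDerivWithinAt F (F' x) (Icc (-D) D) x)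
    (hF'cont : ContinuousOn F' (Icc (-D) D))
    (hf : ∀ x ∈ Icc (-D) D, HasDerivWithinAt f (f' x) (Icc (-D) D) x)
    (hf' : ∀ x ∈ Icc (-D) D, HasDerivWithinAt f' (f'' x) (Icc (-D) D) x)
    (hf''cont : ContinuousOn f'' (Icc (-D) D))
    (hf0 : f (-D) = 0) (hf1 : f D = 0)
    (hfpos : ∀ x ∈ Ioo (-D) D, 0 < f x)
    (heq : ∀ x ∈ Ioo (-D) D, -f'' x = F' x * f x + F x * f' x + lam * f x) :
    ∀ s ∈ Ioo (0 : ℝ) 1,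
      4 * s * (1 - s) * (Real.pi / (2 * D)) ^ 2 ≤
        lam + s * sSup (F' '' Ioo (-D) D) :=
  stmt_0_general D hD F F' f f' f'' lam hF hF'cont hf hf' hf0 hf1 hfpos heq
end

section
/- Let D > 0 and a > 1, and let f : ℝ → ℝ be twice continuously differentiable on [-D, D] with f(-D) = f(D) = 0 and f(x) > 0 for all x ∈ (-D, D). Then -∫_{-D}^{D} f(x)^{a-1} f''(x) dx = (4(a-1)/a²) ∫_{-D}^{D} ((f^{a/2})'(x))² dx; in particular the (possibly improper) integral on the right-hand side converges. -/
open Set Real MeasureTheory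

/-!
On `(-D, D)` the function `F = f^(a-1) f'` has derivative
`(a-1) f^(a-2) f'^2 + f^(a-1) f'' = (4(a-1)/a²) ((f^{a/2})')² + f^(a-1) f''`.
Subtracting a primitive of the continuous function `f^(a-1) f''` leaves a function continuous on
`[-D, D]` with nonnegative derivative on `(-D, D)`; such a derivative is automatically integrable,
with integral the increment of the function. The boundary terms vanish because `a > 1` forces
`F(±D) = 0`.
-/

section

variable {a b : ℝ} {F P ψ : ℝ → ℝ}

lemma continuousOn_sub_primitive (hab : a ≤ b) (hF : ContinuousOn F (Icc a b))
    (hψ : ContinuousOn ψ (Icc a b)) :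
    ContinuousOn (fun y => F y - ∫ t in a..y, ψ t) (Icc a b) := by
  have hprim := intervalIntegral.continuousOn_primitive_interval (μ := volume) (f := ψ)
    (a := a) (b := b) (by rw [uIcc_of_le hab]; exact hψ.integrableOn_Icc)
  rw [uIcc_of_le hab] at hprim
  exact hF.sub hprim

lemma hasDerivAt_sub_primitive (hψ : ContinuousOn ψ (Icc a b)) {x : ℝ} (hx : x ∈ Ioo a b)
    (hF : HasDerivAt F (P x + ψ x) x) :
    HasDerivAt (fun y => F y - ∫ t in a..y, ψ t) (P x) x := by
  have hprim : HasDerivAt (fun y => ∫ t in a..y, ψ t) (ψ x) x :=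
    intervalIntegral.integral_hasDerivAt_right
      ((hψ.mono (Icc_subset_Icc_right hx.2.le)).intervalIntegrable_of_Icc hx.1.le)
      ((hψ.mono Ioo_subset_Icc_self).stronglyMeasurableAtFilter isOpen_Ioo x hx)
      (hψ.continuousAt (Icc_mem_nhds hx.1 hx.2))
  exact (hF.sub hprim).congr_deriv (add_sub_cancel_right _ _)

theorem integrableOn_Ioo_of_hasDerivAt_add_of_nonneg (hab : a ≤ b)
    (hF : ContinuousOn F (Icc a b)) (hψ : ContinuousOn ψ (Icc a b))
    (hderiv : ∀ x ∈ Ioo a b, HasDerivAt F (P x + ψ x) x) (hP : ∀ x ∈ Ioo a b, 0 ≤ P x) :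
    IntegrableOn P (Ioo a b) :=
  (intervalIntegral.integrableOn_deriv_of_nonneg (continuousOn_sub_primitive hab hF hψ)
    (fun x hx => hasDerivAt_sub_primitive hψ hx (hderiv x hx)) hP).mono_set Ioo_subset_Ioc_self

theorem setIntegral_Ioo_eq_of_hasDerivAt_add_of_nonneg (hab : a ≤ b)
    (hF : ContinuousOn F (Icc a b)) (hψ : ContinuousOn ψ (Icc a b))
    (hderiv : ∀ x ∈ Ioo a b, HasDerivAt F (P x + ψ x) x) (hP : ∀ x ∈ Ioo a b, 0 ≤ P x) :
    ∫ x in Ioo a b, P x = F b - F a - ∫ x in a..b, ψ x := by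
  have hPint := integrableOn_Ioo_of_hasDerivAt_add_of_nonneg hab hF hψ hderiv hP
  rw [← integral_Ioc_eq_integral_Ioo, ← intervalIntegral.integral_of_le hab,
    intervalIntegral.integral_eq_sub_of_hasDerivAt_of_le hab
      (continuousOn_sub_primitive hab hF hψ)
      (fun x hx => hasDerivAt_sub_primitive hψ hx (hderiv x hx))
      ((intervalIntegrable_iff_integrableOn_Ioo_of_le hab).2 hPint),
    intervalIntegral.integral_same]
  ring

end

section

variable {f f' : ℝ → ℝ} {x fx' f''x a : ℝ}

lemma sq_deriv_rpow_const (hf : HasDerivAt f fx' x) (hx : 0 < f x) (q : ℝ) :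
    deriv (fun y => f y ^ q) x ^ 2 = q ^ 2 * (f x ^ (2 * q - 2) * fx' ^ 2) := by
  rw [(hf.rpow_const (p := q) (Or.inl hx.ne')).deriv, show 2 * q - 2 = (q - 1) * 2 by ring,
    rpow_mul hx.le]
  norm_cast
  ring

lemma hasDerivAt_rpow_sub_one_mul (hf : HasDerivAt f (f' x) x) (hf' : HasDerivAt f' f''x x)
    (hx : 0 < f x) (ha : a ≠ 0) :
    HasDerivAt (fun y => f y ^ (a - 1) * f' y)
      (4 * (a - 1) / a ^ 2 * deriv (fun y => f y ^ (a / 2)) x ^ 2 + f x ^ (a - 1) * f''x) x := by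
  refine ((hf.rpow_const (Or.inl hx.ne')).mul hf').congr_deriv ?_
  rw [sq_deriv_rpow_const hf hx]
  field_simp
  ring_nf

end

/-- Integration-by-parts identity from the proof of Corollary 4.3:
`-∫_{-D}^{D} f^{a-1} f'' = (4(a-1)/a²) ∫_{(-D,D)} ((f^{a/2})')²`,
where the right-hand side is a convergent improper integral over the open
interval `(-D, D)`. -/
theorem stmt_1 (D a : ℝ) (hD : 0 < D) (ha : 1 < a) (f f' f'' : ℝ → ℝ)
    (hf : ∀ x ∈ Icc (-D) D, HasDerivWithinAt f (f' x) (Icc (-D) D) x)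
    (hf' : ∀ x ∈ Icc (-D) D, HasDerivWithinAt f' (f'' x) (Icc (-D) D) x)
    (hf''cont : ContinuousOn f'' (Icc (-D) D))
    (hf0 : f (-D) = 0) (hf1 : f D = 0)
    (hfpos : ∀ x ∈ Ioo (-D) D, 0 < f x) :
    IntegrableOn (fun x => (deriv (fun y => f y ^ (a / 2)) x) ^ 2) (Ioo (-D) D)
      ∧
    -∫ x in (-D)..D, f x ^ (a - 1) * f'' x =
      (4 * (a - 1) / a ^ 2) *
        ∫ x in Ioo (-D) D, (deriv (fun y => f y ^ (a / 2)) x) ^ 2 := by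
  have hDD : -D ≤ D := by linarith
  have hc : 0 < 4 * (a - 1) / a ^ 2 := by have : 0 < a - 1 := sub_pos.2 ha; positivity
  have hfc : ContinuousOn f (Icc (-D) D) := fun x hx => (hf x hx).continuousWithinAt
  have hpow : ContinuousOn (fun x => f x ^ (a - 1)) (Icc (-D) D) :=
    hfc.rpow_const fun _ _ => Or.inr (sub_pos.2 ha).le
  have hF : ContinuousOn (fun x => f x ^ (a - 1) * f' x) (Icc (-D) D) :=
    hpow.mul fun x hx => (hf' x hx).continuousWithinAt
  have hderiv : ∀ x ∈ Ioo (-D) D, HasDerivAt (fun y => f y ^ (a - 1) * f' y)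
      (4 * (a - 1) / a ^ 2 * deriv (fun y => f y ^ (a / 2)) x ^ 2 + f x ^ (a - 1) * f'' x) x :=
    fun x hx => hasDerivAt_rpow_sub_one_mul
      ((hf x (Ioo_subset_Icc_self hx)).hasDerivAt (Icc_mem_nhds hx.1 hx.2))
      ((hf' x (Ioo_subset_Icc_self hx)).hasDerivAt (Icc_mem_nhds hx.1 hx.2))
      (hfpos x hx) (by linarith)
  have hnonneg : ∀ x ∈ Ioo (-D) D,
      0 ≤ 4 * (a - 1) / a ^ 2 * deriv (fun y => f y ^ (a / 2)) x ^ 2 :=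
    fun _ _ => mul_nonneg hc.le (sq_nonneg _)
  have hψ : ContinuousOn (fun x => f x ^ (a - 1) * f'' x) (Icc (-D) D) := hpow.mul hf''cont
  refine ⟨(integrable_const_mul_iff (isUnit_iff_ne_zero.2 hc.ne') _).1
    (integrableOn_Ioo_of_hasDerivAt_add_of_nonneg hDD hF hψ hderiv hnonneg), ?_⟩
  rw [← integral_const_mul,
    setIntegral_Ioo_eq_of_hasDerivAt_add_of_nonneg hDD hF hψ hderiv hnonneg, hf0, hf1, zero_rpow (sub_pos.2 ha).ne']
  ring
end

section
/- Let D > 0 and a > 1, let F : ℝ → ℝ be continuously differentiable on [-D, D], let λ ∈ ℝ, and let f : ℝ → ℝ be twice continuously differentiable on [-D, D] with f(-D) = f(D) = 0 and f(x) > 0 for all x ∈ (-D, D), satisfying the equation -f''(x) = F'(x)·f(x) + F(x)·f'(x) + λ·f(x) for all x ∈ (-D, D). Set s = 1 - 1/a ∈ (0, 1). Then 4s(1-s) ∫_{-D}^{D} ((f^{a/2})'(x))² dx = ∫_{-D}^{D} (λ + s·F'(x)) f(x)^{a} dx. -/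
/-!
Multiply the equation by `f^(a-1)` and integrate over `(-D, D)`. Since `f` vanishes at `±D`,
integrating `(f' f^(a-1))' = f'' f^(a-1) + (a-1) f'^2 f^(a-2)` gives
`(a-1) ∫ f'^2 f^(a-2) = -∫ f'' f^(a-1)`, and integrating `(F f^a)' = F' f^a + a F f' f^(a-1)` gives
`∫ F f' f^(a-1) = -(1/a) ∫ F' f^a`. Together with `((f^(a/2))')^2 = (a/2)^2 f'^2 f^(a-2)` and
`4 s (1-s) (a/2)^2 = a - 1` this is the identity. For `a < 2` the weight `f^(a-2)` blows up at
`±D`; the integral of `f'^2 f^(a-2)` still converges because it is, up to a continuous term,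
a nonnegative derivative.
-/

open Set Real MeasureTheory intervalIntegral

section Primitive

variable {a b : ℝ} {φ ψ u : ℝ → ℝ}

theorem hasDerivAt_primitive_of_continuousOn (hφ : ContinuousOn φ (Icc a b)) {x : ℝ}
    (hx : x ∈ Ioo a b) : HasDerivAt (fun t => ∫ s in a..t, φ s) (φ x) x :=
  integral_hasDerivAt_right
    ((hφ.mono (Icc_subset_Icc_right hx.2.le)).intervalIntegrable_of_Icc hx.1.le)
    ((hφ.mono Ioo_subset_Icc_self).stronglyMeasurableAtFilter isOpen_Ioo x hx)
    ((hφ x (Ioo_subset_Icc_self hx)).continuousAt (Icc_mem_nhds hx.1 hx.2))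

theorem continuousOn_primitive_of_continuousOn (hab : a ≤ b) (hφ : ContinuousOn φ (Icc a b)) :
    ContinuousOn (fun t => ∫ s in a..t, φ s) (Icc a b) := by
  rw [← uIcc_of_le hab] at hφ ⊢
  exact continuousOn_primitive_interval (hφ.integrableOn_compact isCompact_uIcc)

theorem intervalIntegrable_of_hasDerivAt_add_nonneg (hab : a ≤ b)
    (hu : ContinuousOn u (Icc a b)) (hφ : ContinuousOn φ (Icc a b))
    (hderiv : ∀ x ∈ Ioo a b, HasDerivAt u (φ x + ψ x) x) (hψ : ∀ x ∈ Ioo a b, 0 ≤ ψ x) :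
    IntervalIntegrable ψ volume a b := by
  have hψ_deriv : ∀ x ∈ Ioo a b, HasDerivAt (fun t => u t - ∫ s in a..t, φ s) (ψ x) x :=
    fun x hx => ((hderiv x hx).sub (hasDerivAt_primitive_of_continuousOn hφ hx)).congr_deriv
      (add_sub_cancel_left _ _)
  exact (intervalIntegrable_iff_integrableOn_Ioc_of_le hab).mpr <|
    integrableOn_deriv_of_nonneg (hu.sub (continuousOn_primitive_of_continuousOn hab hφ))
      hψ_deriv hψ

theorem integral_add_eq_sub_of_hasDerivAt_of_nonneg (hab : a ≤ b)
    (hu : ContinuousOn u (Icc a b)) (hφ : ContinuousOn φ (Icc a b))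
    (hderiv : ∀ x ∈ Ioo a b, HasDerivAt u (φ x + ψ x) x) (hψ : ∀ x ∈ Ioo a b, 0 ≤ ψ x) :
    ∫ x in a..b, (φ x + ψ x) = u b - u a :=
  integral_eq_sub_of_hasDerivAt_of_le hab hu hderiv <|
    (hφ.intervalIntegrable_of_Icc hab).add
      (intervalIntegrable_of_hasDerivAt_add_nonneg hab hu hφ hderiv hψ)

end Primitive

section Weighted

variable {a b p : ℝ} {f f' f'' g g' : ℝ → ℝ}

theorem integral_sq_deriv_mul_rpow_sub_two (hab : a ≤ b) (hp : 1 < p)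
    (hf : ContinuousOn f (Icc a b)) (hf' : ContinuousOn f' (Icc a b))
    (hf'' : ContinuousOn f'' (Icc a b)) (hfd : ∀ x ∈ Ioo a b, HasDerivAt f (f' x) x)
    (hf'd : ∀ x ∈ Ioo a b, HasDerivAt f' (f'' x) x) (hpos : ∀ x ∈ Ioo a b, 0 < f x)
    (ha : f a = 0) (hb : f b = 0) :
    (p - 1) * ∫ x in a..b, f' x ^ 2 * f x ^ (p - 2) = -∫ x in a..b, f'' x * f x ^ (p - 1) := by
  have hrpow : ContinuousOn (fun x => f x ^ (p - 1)) (Icc a b) :=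
    hf.rpow_const fun _ _ => Or.inr (by linarith)
  have hderiv : ∀ x ∈ Ioo a b, HasDerivAt (fun y => f' y * f y ^ (p - 1))
      (f'' x * f x ^ (p - 1) + (p - 1) * (f' x ^ 2 * f x ^ (p - 2))) x := fun x hx => by
    refine ((hf'd x hx).mul ((hfd x hx).rpow_const (p := p - 1) (Or.inl (hpos x hx).ne'))
      ).congr_deriv ?_
    rw [show p - 1 - 1 = p - 2 by ring]
    ring
  have hnonneg : ∀ x ∈ Ioo a b, 0 ≤ (p - 1) * (f' x ^ 2 * f x ^ (p - 2)) := fun x hx =>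
    mul_nonneg (by linarith) (mul_nonneg (sq_nonneg _) (rpow_nonneg (hpos x hx).le _))
  have hu : ContinuousOn (fun x => f' x * f x ^ (p - 1)) (Icc a b) := hf'.mul hrpow
  have hφ : ContinuousOn (fun x => f'' x * f x ^ (p - 1)) (Icc a b) := hf''.mul hrpow
  have hsum := integral_add_eq_sub_of_hasDerivAt_of_nonneg hab hu hφ hderiv hnonneg
  rw [integral_add (hφ.intervalIntegrable_of_Icc hab)
    (intervalIntegrable_of_hasDerivAt_add_nonneg hab hu hφ hderiv hnonneg), ha, hb,
    zero_rpow (by linarith), intervalIntegral.integral_const_mul] at hsum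
  linarith

theorem integral_deriv_mul_rpow_eq_zero (hab : a ≤ b) (hp : 1 ≤ p)
    (hf : ContinuousOn f (Icc a b)) (hf' : ContinuousOn f' (Icc a b))
    (hg : ContinuousOn g (Icc a b)) (hg' : ContinuousOn g' (Icc a b))
    (hfd : ∀ x ∈ Ioo a b, HasDerivAt f (f' x) x) (hgd : ∀ x ∈ Ioo a b, HasDerivAt g (g' x) x)
    (hpos : ∀ x ∈ Ioo a b, 0 < f x) (ha : f a = 0) (hb : f b = 0) :
    ∫ x in a..b, (g' x * f x ^ p + g x * (f' x * p * f x ^ (p - 1))) = 0 := by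
  have hrpow (q : ℝ) (hq : 0 ≤ q) : ContinuousOn (fun x => f x ^ q) (Icc a b) :=
    hf.rpow_const fun _ _ => Or.inr hq
  rw [integral_eq_sub_of_hasDerivAt_of_le hab (hg.mul (hrpow p (by linarith)))
    (fun x hx => (hgd x hx).mul ((hfd x hx).rpow_const (Or.inl (hpos x hx).ne')))
    (((hg'.mul (hrpow p (by linarith))).add (hg.mul ((hf'.mul continuousOn_const).mul
      (hrpow (p - 1) (by linarith))))).intervalIntegrable_of_Icc hab)]
  simp only [Pi.mul_apply, ha, hb, zero_rpow (by linarith : p ≠ 0), mul_zero, sub_zero]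

theorem setIntegral_Ioo_sq_deriv_rpow_half (hab : a ≤ b)
    (hfd : ∀ x ∈ Ioo a b, HasDerivAt f (f' x) x) (hpos : ∀ x ∈ Ioo a b, 0 < f x) :
    ∫ x in Ioo a b, deriv (fun y => f y ^ (p / 2)) x ^ 2 =
      (p / 2) ^ 2 * ∫ x in a..b, f' x ^ 2 * f x ^ (p - 2) := by
  have hpoint : ∀ x ∈ Ioo a b,
      deriv (fun y => f y ^ (p / 2)) x ^ 2 = (p / 2) ^ 2 * (f' x ^ 2 * f x ^ (p - 2)) := by
    intro x hx
    have hsq : (f x ^ (p / 2 - 1)) ^ 2 = f x ^ (p - 2) := by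
      rw [← rpow_natCast, ← rpow_mul (hpos x hx).le]
      ring_nf
    rw [((hfd x hx).rpow_const (Or.inl (hpos x hx).ne')).deriv, mul_pow, hsq]
    ring
  rw [setIntegral_congr_fun measurableSet_Ioo hpoint, MeasureTheory.integral_const_mul,
    integral_of_le hab, integral_Ioc_eq_integral_Ioo]

end Weighted

theorem stmt_3_general (D a : ℝ) (hD : 0 < D) (ha : 1 < a) (F F' f f' f'' : ℝ → ℝ)
    (lam : ℝ)
    (hF : ∀ x ∈ Icc (-D) D, HasDerivWithinAt F (F' x) (Icc (-D) D) x)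
    (hF'cont : ContinuousOn F' (Icc (-D) D))
    (hf : ∀ x ∈ Icc (-D) D, HasDerivWithinAt f (f' x) (Icc (-D) D) x)
    (hf' : ∀ x ∈ Icc (-D) D, HasDerivWithinAt f' (f'' x) (Icc (-D) D) x)
    (hf0 : f (-D) = 0) (hf1 : f D = 0)
    (hfpos : ∀ x ∈ Ioo (-D) D, 0 < f x)
    (heq : ∀ x ∈ Ioo (-D) D, -f'' x = F' x * f x + F x * f' x + lam * f x) :
    4 * (1 - 1 / a) * (1 - (1 - 1 / a)) *
        (∫ x in Ioo (-D) D, (deriv (fun y => f y ^ (a / 2)) x) ^ 2) =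
      ∫ x in (-D)..D, (lam + (1 - 1 / a) * F' x) * f x ^ a := by
  have hDD : -D ≤ D := by linarith
  have hcont {g g' : ℝ → ℝ} (h : ∀ x ∈ Icc (-D) D, HasDerivWithinAt g (g' x) (Icc (-D) D) x) :
      ContinuousOn g (Icc (-D) D) := fun x hx => (h x hx).continuousWithinAt
  have hderiv {g g' : ℝ → ℝ} (h : ∀ x ∈ Icc (-D) D, HasDerivWithinAt g (g' x) (Icc (-D) D) x) :
      ∀ x ∈ Ioo (-D) D, HasDerivAt g (g' x) x := fun x hx =>
    (h x (Ioo_subset_Icc_self hx)).hasDerivAt (Icc_mem_nhds hx.1 hx.2)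
  have hrpow (q : ℝ) (hq : 0 ≤ q) : ContinuousOn (fun x => f x ^ q) (Icc (-D) D) :=
    (hcont hf).rpow_const fun _ _ => Or.inr hq
  set G : ℝ → ℝ := fun x => F' x * f x + F x * f' x + lam * f x
  have hG : ContinuousOn G (Icc (-D) D) :=
    ((hF'cont.mul (hcont hf)).add ((hcont hF).mul (hcont hf'))).add
      (continuousOn_const.mul (hcont hf))
  have hode : ∀ x ∈ Ioo (-D) D, HasDerivAt f' (-G x) x := fun x hx =>
    (hderiv hf' x hx).congr_deriv (neg_eq_iff_eq_neg.mp (heq x hx))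
  have energy := integral_sq_deriv_mul_rpow_sub_two hDD ha (hcont hf) (hcont hf') hG.neg
    (hderiv hf) hode hfpos hf0 hf1
  simp only [Pi.neg_apply, neg_mul, intervalIntegral.integral_neg, neg_neg] at energy
  have hparts := integral_deriv_mul_rpow_eq_zero hDD ha.le (hcont hf) (hcont hf')
    (hcont hF) hF'cont (hderiv hf) (hderiv hF) hfpos hf0 hf1
  have hpoint : EqOn (fun x => (lam + (1 - 1 / a) * F' x) * f x ^ a)
      (fun x => G x * f x ^ (a - 1) - 1 / a * (F' x * f x ^ a + F x * (f' x * a * f x ^ (a - 1))))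
      (Ioo (-D) D) := fun x hx => by
    have hfx : f x ≠ 0 := (hfpos x hx).ne'
    simp only [G, rpow_sub_one hfx]
    field_simp
    ring
  rw [setIntegral_Ioo_sq_deriv_rpow_half hDD (hderiv hf) hfpos, integral_congr_Ioo_of_le hDD hpoint,
    intervalIntegral.integral_sub, intervalIntegral.integral_const_mul, hparts, ← energy]
  · field_simp
    ring
  · exact (hG.mul (hrpow (a - 1) (by linarith))).intervalIntegrable_of_Icc hDD
  · exact (continuousOn_const.mul ((hF'cont.mul (hrpow a (by linarith))).add ((hcont hF).mul
      (((hcont hf').mul continuousOn_const).mul (hrpow (a - 1) (by linarith)))))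
      ).intervalIntegrable_of_Icc hDD

/-- Key intermediate identity in the proof of Corollary 4.3: with `s = 1 - 1/a`,
`4 s (1-s) ∫_{(-D,D)} ((f^{a/2})')² = ∫_{-D}^{D} (λ + s F') f^a`. -/
theorem stmt_3 (D a : ℝ) (hD : 0 < D) (ha : 1 < a) (F F' f f' f'' : ℝ → ℝ)
    (lam : ℝ)
    (hF : ∀ x ∈ Icc (-D) D, HasDerivWithinAt F (F' x) (Icc (-D) D) x)
    (hF'cont : ContinuousOn F' (Icc (-D) D))
    (hf : ∀ x ∈ Icc (-D) D, HasDerivWithinAt f (f' x) (Icc (-D) D) x)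
    (hf' : ∀ x ∈ Icc (-D) D, HasDerivWithinAt f' (f'' x) (Icc (-D) D) x)
    (hf''cont : ContinuousOn f'' (Icc (-D) D))
    (hf0 : f (-D) = 0) (hf1 : f D = 0)
    (hfpos : ∀ x ∈ Ioo (-D) D, 0 < f x)
    (heq : ∀ x ∈ Ioo (-D) D, -f'' x = F' x * f x + F x * f' x + lam * f x) :
    4 * (1 - 1 / a) * (1 - (1 - 1 / a)) *
        (∫ x in Ioo (-D) D, (deriv (fun y => f y ^ (a / 2)) x) ^ 2) =
      ∫ x in (-D)..D, (lam + (1 - 1 / a) * F' x) * f x ^ a :=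
  stmt_3_general D a hD ha F F' f f' f'' lam hF hF'cont hf hf' hf0 hf1 hfpos heq
end

section
/- Let n ≥ 2 be an integer, K ∈ ℝ, λ ∈ ℝ, and d > 0, with the additional assumption d < π/√K when K > 0. Define T_K : ℝ → ℝ by T_K(x) = √K·tan(√K·x) if K > 0, T_K(x) = 0 if K = 0, and T_K(x) = -√(-K)·tanh(√(-K)·x) if K < 0. Suppose v : ℝ → ℝ is three times continuously differentiable on [-d/2, d/2], satisfies the Neumann conditions v'(-d/2) = v'(d/2) = 0, has v'(x) > 0 for all x ∈ (-d/2, d/2), and solves v''(x) - (n-1)·T_K(x)·v'(x) = -λ·v(x) for all x ∈ (-d/2, d/2). Then for every s ∈ (0, 1), λ ≥ 4s(1-s)·π²/d² + s·(n-1)·K. -/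
/-!
If `λ` were below the bound, pick `k < π / d` and `b ≥ 4 s (1 - s)` so that
`u = cos_K ^ (s (n - 1)) · cos (k x) ^ b` is a positive supersolution of the self-adjoint equation
`(ρ W')' + λ ρ W = 0`, `ρ = cos_K ^ (-(n - 1))`, which `W = cos_K ^ (n - 1) · v'` solves; here
`cos_K = modelC K` is the model cosine, with `-cos_K' / cos_K = T_K`, and the admissibility of `b`
is the negative semidefiniteness of a quadratic form in `(T_K, k tan (k x))`. The Neumann
conditions make `W` vanish at `±d/2` while it is positive inside. This contradicts Sturm
comparison: the weighted Wronskian `ρ (u' W - W' u)` is nonincreasing, yet the mean value theorem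
applied to `W / u` on either half of the interval makes it negative on the left and positive on
the right.
-/

open Set Real

/-- The coefficient function `T_K` of the one-dimensional model operator
`L v = v'' - (n-1) T_K v'`. -/
noncomputable def modelT (K x : ℝ) : ℝ :=
  if 0 < K then Real.sqrt K * Real.tan (Real.sqrt K * x)
  else if K = 0 then 0
  else -Real.sqrt (-K) * Real.tanh (Real.sqrt (-K) * x)

/-- `(c, T)` abstracts `(cos (√K x), √K tan (√K x))`: `T = -c' / c` solves `T' = K + T²`. -/
def IsModelPair (K : ℝ) (c T : ℝ → ℝ) (s : Set ℝ) : Prop :=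
  ∀ x ∈ s, 0 < c x ∧ HasDerivAt c (-(T x * c x)) x ∧ HasDerivAt T (K + T x ^ 2) x

theorem IsModelPair.mono {K : ℝ} {c T : ℝ → ℝ} {s t : Set ℝ} (h : IsModelPair K c T s)
    (hts : t ⊆ s) : IsModelPair K c T t :=
  fun x hx => h x (hts hx)

theorem IsModelPair.hasDerivAt_rpow {K : ℝ} {c T : ℝ → ℝ} {s : Set ℝ} (h : IsModelPair K c T s)
    {x : ℝ} (hx : x ∈ s) (p : ℝ) : HasDerivAt (fun y => c y ^ p) (c x ^ p * -(p * T x)) x := by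
  obtain ⟨hc, hc', -⟩ := h x hx
  refine (hc'.rpow_const (Or.inl hc.ne')).congr_deriv ?_
  rw [rpow_sub_one hc.ne']
  field_simp

theorem isModelPair_cos (ω : ℝ) :
    IsModelPair (ω ^ 2) (fun x => cos (ω * x)) (fun x => ω * tan (ω * x))
      {x | |ω * x| < π / 2} := by
  intro x hx
  have hcos : 0 < cos (ω * x) := cos_pos_of_mem_Ioo (abs_lt.mp hx)
  have hlin : HasDerivAt (fun y => ω * y) ω x := by simpa using (hasDerivAt_id x).const_mul ω
  refine ⟨hcos, hlin.cos.congr_deriv ?_, ?_⟩ <;> dsimp only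
  · rw [tan_eq_sin_div_cos]
    field_simp
  · refine (((hasDerivAt_tan hcos.ne').comp x hlin).const_mul ω).congr_deriv ?_
    rw [tan_eq_sin_div_cos, ← sin_sq_add_cos_sq (ω * x)]
    field_simp
    ring

theorem isModelPair_cosh (ω : ℝ) :
    IsModelPair (-ω ^ 2) (fun x => cosh (ω * x)) (fun x => -ω * tanh (ω * x)) univ := by
  intro x _
  have hlin : HasDerivAt (fun y => ω * y) ω x := by simpa using (hasDerivAt_id x).const_mul ω
  have hcosh : 0 < cosh (ω * x) := cosh_pos _
  have htanh : (fun y => -ω * tanh (ω * y)) = fun y => -ω * (sinh (ω * y) / cosh (ω * y)) := by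
    simp only [tanh_eq_sinh_div_cosh]
  refine ⟨hcosh, hlin.cosh.congr_deriv ?_, ?_⟩ <;> dsimp only
  · rw [tanh_eq_sinh_div_cosh]
    field_simp
  · rw [htanh]
    refine ((hlin.sinh.div hlin.cosh hcosh.ne').const_mul (-ω)).congr_deriv ?_
    rw [tanh_eq_sinh_div_cosh]
    field_simp
    ring

theorem isModelPair_const : IsModelPair 0 (fun _ => 1) (fun _ => 0) univ :=
  fun _ _ => ⟨one_pos, by simpa using hasDerivAt_const _ (1 : ℝ),
    by simpa using hasDerivAt_const _ (0 : ℝ)⟩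

noncomputable def modelC (K x : ℝ) : ℝ :=
  if 0 < K then cos (√K * x)
  else if K = 0 then 1
  else cosh (√(-K) * x)

theorem isModelPair_model (K : ℝ) :
    IsModelPair K (modelC K) (modelT K) {x | 0 < K → |√K * x| < π / 2} := by
  rcases lt_trichotomy K 0 with hK | rfl | hK
  · have hc : modelC K = fun x => cosh (√(-K) * x) := by
      funext x; simp [modelC, hK.not_gt, hK.ne]
    have hT : modelT K = fun x => -√(-K) * tanh (√(-K) * x) := by
      funext x; simp [modelT, hK.not_gt, hK.ne]
    have h := isModelPair_cosh √(-K)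
    rw [sq_sqrt (neg_nonneg.mpr hK.le), neg_neg] at h
    rw [hc, hT]
    exact h.mono (subset_univ _)
  · have hc : modelC 0 = fun _ => 1 := by funext x; simp [modelC]
    have hT : modelT 0 = fun _ => 0 := by funext x; simp [modelT]
    rw [hc, hT]
    exact isModelPair_const.mono (subset_univ _)
  · have hc : modelC K = fun x => cos (√K * x) := by funext x; simp [modelC, hK]
    have hT : modelT K = fun x => √K * tan (√K * x) := by funext x; simp [modelT, hK]
    have h := isModelPair_cos √K
    rw [sq_sqrt hK.le] at h
    rw [hc, hT]
    exact h.mono fun x hx => hx hK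

theorem abs_mul_lt_pi_div_two {ω d x : ℝ} (hω : 0 ≤ ω) (hωd : ω * d < π)
    (hx : x ∈ Icc (-(d / 2)) (d / 2)) : |ω * x| < π / 2 := by
  rw [abs_mul, abs_of_nonneg hω]
  nlinarith [abs_le.mpr hx]

/-- The largest admissible `b` is `4 s (m + 1 - s m) / (m + 4 s)`, for which
`(m + 4 s)² · form = -4 s m (m + 1 - s m) ((m + 4 s) t / 2 + (1 - 2 s) τ)²`. -/
theorem exists_quadratic_form_nonpos {m s : ℝ} (hm : 0 ≤ m) (hs0 : 0 < s) (hs1 : s < 1) :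
    ∃ b, 4 * s * (1 - s) ≤ b ∧ ∀ t τ : ℝ,
      s * m * (s * m - m - 1) * t ^ 2 + b * (2 * (s * m) - m) * t * τ + b * (b - 1) * τ ^ 2
        ≤ 0 := by
  have hD : 0 < m + 1 - s * m := by nlinarith
  have hE : 0 < m + 4 * s := by linarith
  set b := 4 * s * (m + 1 - s * m) / (m + 4 * s) with hb
  refine ⟨b, ?_, fun t τ => ?_⟩
  · rw [hb, le_div_iff₀ hE]
    nlinarith [mul_nonneg hs0.le (sq_nonneg (1 - 2 * s))]
  · have key : s * m * (s * m - m - 1) * t ^ 2 + b * (2 * (s * m) - m) * t * τ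
          + b * (b - 1) * τ ^ 2
        = -(4 * s * m * (m + 1 - s * m) * ((m + 4 * s) * t / 2 + (1 - 2 * s) * τ) ^ 2)
          / (m + 4 * s) ^ 2 := by
      rw [hb]
      field_simp
      ring
    rw [key]
    exact div_nonpos_of_nonpos_of_nonneg (neg_nonpos.mpr (by positivity)) (sq_nonneg _)

theorem false_of_dirichlet_solution_of_supersolution {α β lam : ℝ} {ρ W P u Q Q' : ℝ → ℝ}
    (hαβ : α < β) (hρ : ∀ x ∈ Ioo α β, 0 < ρ x)
    (hWc : ContinuousOn W (Icc α β)) (hWα : W α = 0) (hWβ : W β = 0)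
    (hWpos : ∀ x ∈ Ioo α β, 0 < W x)
    (hW : ∀ x ∈ Ioo α β, HasDerivAt W (P x / ρ x) x)
    (hP : ∀ x ∈ Ioo α β, HasDerivAt P (-(lam * ρ x * W x)) x)
    (huc : ContinuousOn u (Icc α β)) (hupos : ∀ x ∈ Icc α β, 0 < u x)
    (hu : ∀ x ∈ Ioo α β, HasDerivAt u (Q x / ρ x) x)
    (hQ : ∀ x ∈ Ioo α β, HasDerivAt Q (Q' x) x)
    (hsuper : ∀ x ∈ Ioo α β, Q' x + lam * ρ x * u x ≤ 0) : False := by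
  set Z : ℝ → ℝ := fun x => Q x * W x - P x * u x
  have hZ : ∀ x ∈ Ioo α β, HasDerivAt Z (W x * (Q' x + lam * ρ x * u x)) x := fun x hx => by
    refine (((hQ x hx).mul (hW x hx)).sub ((hP x hx).mul (hu x hx))).congr_deriv ?_
    ring
  have hZanti : AntitoneOn Z (Ioo α β) := by
    refine antitoneOn_of_hasDerivWithinAt_nonpos (convex_Ioo α β)
      (f' := fun x => W x * (Q' x + lam * ρ x * u x))
      (fun x hx => (hZ x hx).continuousAt.continuousWithinAt) (fun x hx => ?_) (fun x hx => ?_) <;>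
      rw [interior_Ioo] at hx
    · exact (hZ x hx).hasDerivWithinAt
    · exact mul_nonpos_of_nonneg_of_nonpos (hWpos x hx).le (hsuper x hx)
  -- `W / u` vanishes at both ends and is positive inside, while `(W / u)' = -Z / (ρ u²)`.
  set q : ℝ → ℝ := fun x => W x / u x
  have hq : ∀ x ∈ Ioo α β, HasDerivAt q (-Z x / (ρ x * u x ^ 2)) x := fun x hx => by
    have hux := hupos x (Ioo_subset_Icc_self hx)
    refine ((hW x hx).div (hu x hx) hux.ne').congr_deriv ?_
    field_simp [(hρ x hx).ne']
    ring
  have hqc : ContinuousOn q (Icc α β) := hWc.div huc fun x hx => (hupos x hx).ne'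
  have hD : ∀ ξ ∈ Ioo α β, 0 < ρ ξ * u ξ ^ 2 := fun ξ hξ => by
    have := hupos ξ (Ioo_subset_Icc_self hξ); have := hρ ξ hξ; positivity
  obtain ⟨γ, hγ⟩ := exists_between hαβ
  have hqγ : 0 < q γ := div_pos (hWpos γ hγ) (hupos γ (Ioo_subset_Icc_self hγ))
  obtain ⟨ξ₁, hξ₁, h₁⟩ := exists_hasDerivAt_eq_slope q _ hγ.1
    (hqc.mono (Icc_subset_Icc_right hγ.2.le)) fun x hx => hq x ⟨hx.1, hx.2.trans hγ.2⟩
  obtain ⟨ξ₂, hξ₂, h₂⟩ := exists_hasDerivAt_eq_slope q _ hγ.2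
    (hqc.mono (Icc_subset_Icc_left hγ.1.le)) fun x hx => hq x ⟨hγ.1.trans hx.1, hx.2⟩
  have hξ₁' : ξ₁ ∈ Ioo α β := ⟨hξ₁.1, hξ₁.2.trans hγ.2⟩
  have hξ₂' : ξ₂ ∈ Ioo α β := ⟨hγ.1.trans hξ₂.1, hξ₂.2⟩
  have hZ₁ : Z ξ₁ < 0 := by
    have : 0 < -Z ξ₁ / (ρ ξ₁ * u ξ₁ ^ 2) := by
      rw [h₁, show q α = 0 by simp [q, hWα]]
      exact div_pos (by linarith) (by linarith [hξ₁.2])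
    linarith [(div_pos_iff_of_pos_right (hD ξ₁ hξ₁')).mp this]
  have hZ₂ : 0 < Z ξ₂ := by
    have : 0 < Z ξ₂ / (ρ ξ₂ * u ξ₂ ^ 2) := by
      rw [← neg_neg (Z ξ₂), neg_div, h₂, show q β = 0 by simp [q, hWβ], neg_pos]
      exact div_neg_of_neg_of_pos (by linarith) (by linarith [hξ₂.1])
    exact (div_pos_iff_of_pos_right (hD ξ₂ hξ₂')).mp this
  linarith [hZanti hξ₁' hξ₂' (hξ₁.2.trans hξ₂.1).le]

/-- With `ρ = c^(-m)`, `W = v' / ρ` solves `(ρ W')' = -λ ρ W` with `ρ W' = -λ v`, and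
`u = c^a C^b` has logarithmic derivative `F = -(a T + b S)`, so that
`(ρ u')' + λ ρ u = ρ u (F' + F² + m T F + λ)`, where `F' + F² + m T F + λ` is a quadratic form
in `(T, S)` plus `λ - a K - b K'`. -/
theorem lt_eigenvalue_of_quadratic_form_nonpos {α β m K K' a b lam : ℝ}
    {c T C S v v' v'' : ℝ → ℝ} (hαβ : α < β)
    (hcT : IsModelPair K c T (Icc α β)) (hCS : IsModelPair K' C S (Icc α β))
    (hv : ∀ x ∈ Ioo α β, HasDerivAt v (v' x) x) (hv'c : ContinuousOn v' (Icc α β))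
    (hv' : ∀ x ∈ Ioo α β, HasDerivAt v' (v'' x) x)
    (hα : v' α = 0) (hβ : v' β = 0) (hmono : ∀ x ∈ Ioo α β, 0 < v' x)
    (heq : ∀ x ∈ Ioo α β, v'' x - m * T x * v' x = -lam * v x)
    (hquad : ∀ t τ : ℝ,
      a * (a - m - 1) * t ^ 2 + b * (2 * a - m) * t * τ + b * (b - 1) * τ ^ 2 ≤ 0) :
    a * K + b * K' < lam := by
  by_contra! hlam
  set ρ : ℝ → ℝ := fun x => c x ^ (-m)
  set u : ℝ → ℝ := fun x => c x ^ a * C x ^ b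
  set F : ℝ → ℝ := fun x => -(a * T x + b * S x)
  have hρpos : ∀ x ∈ Icc α β, 0 < ρ x := fun x hx => rpow_pos_of_pos (hcT x hx).1 _
  have hupos : ∀ x ∈ Icc α β, 0 < u x := fun x hx =>
    mul_pos (rpow_pos_of_pos (hcT x hx).1 _) (rpow_pos_of_pos (hCS x hx).1 _)
  have hρ : ∀ x ∈ Icc α β, HasDerivAt ρ (ρ x * (m * T x)) x := fun x hx =>
    (hcT.hasDerivAt_rpow hx (-m)).congr_deriv (by ring)
  have hu : ∀ x ∈ Icc α β, HasDerivAt u (u x * F x) x := fun x hx =>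
    ((hcT.hasDerivAt_rpow hx a).mul (hCS.hasDerivAt_rpow hx b)).congr_deriv (by ring)
  have hF : ∀ x ∈ Icc α β, HasDerivAt F (-(a * (K + T x ^ 2) + b * (K' + S x ^ 2))) x :=
    fun x hx => (((hcT x hx).2.2.const_mul a).add ((hCS x hx).2.2.const_mul b)).neg
  refine false_of_dirichlet_solution_of_supersolution hαβ (lam := lam) (ρ := ρ)
    (W := fun x => v' x / ρ x) (P := fun x => -(lam * v x)) (u := u)
    (Q := fun x => ρ x * (u x * F x))
    (fun x hx => hρpos x (Ioo_subset_Icc_self hx))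
    (hv'c.div (fun x hx => (hρ x hx).continuousAt.continuousWithinAt)
      fun x hx => (hρpos x hx).ne')
    (by simp [hα]) (by simp [hβ])
    (fun x hx => div_pos (hmono x hx) (hρpos x (Ioo_subset_Icc_self hx)))
    (fun x hx => ?_) (fun x hx => ?_)
    (fun x hx => (hu x hx).continuousAt.continuousWithinAt) hupos (fun x hx => ?_)
    (fun x hx => ((hρ x (Ioo_subset_Icc_self hx)).mul ((hu x (Ioo_subset_Icc_self hx)).mul
      (hF x (Ioo_subset_Icc_self hx)))))
    (fun x hx => ?_)
  all_goals have hρx := hρpos x (Ioo_subset_Icc_self hx)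
  · refine ((hv' x hx).div (hρ x (Ioo_subset_Icc_self hx)) hρx.ne').congr_deriv ?_
    field_simp
    linear_combination heq x hx
  · refine ((hv x hx).const_mul lam).neg.congr_deriv ?_
    field_simp
  · refine (hu x (Ioo_subset_Icc_self hx)).congr_deriv ?_
    field_simp
  · have hform := hquad (T x) (S x)
    calc _ = ρ x * u x * ((a * (a - m - 1) * T x ^ 2 + b * (2 * a - m) * T x * S x
            + b * (b - 1) * S x ^ 2) + (lam - (a * K + b * K'))) := by ring
      _ ≤ 0 := mul_nonpos_of_nonneg_of_nonpos
        (mul_pos hρx (hupos x (Ioo_subset_Icc_self hx))).le (by linarith)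

theorem exists_lt_of_lt_sq_mul_add {A B lam ℓ : ℝ} (hℓ : 0 < ℓ) (h : lam < A * ℓ ^ 2 + B) :
    ∃ k ∈ Ioo 0 ℓ, lam < A * k ^ 2 + B := by
  have hcont : Filter.Tendsto (fun k => A * k ^ 2 + B) (nhdsWithin ℓ (Iio ℓ))
      (nhds (A * ℓ ^ 2 + B)) :=
    ((by fun_prop : Continuous fun k : ℝ => A * k ^ 2 + B).tendsto ℓ).mono_left nhdsWithin_le_nhds
  exact (Filter.Eventually.and (Ioo_mem_nhdsLT hℓ) (hcont.eventually_const_lt h)).exists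

theorem stmt_4_general (n : ℕ) (hn : 2 ≤ n) (K lam d : ℝ) (hd : 0 < d)
    (hdK : 0 < K → d < Real.pi / Real.sqrt K)
    (v v' v'' : ℝ → ℝ)
    (hv : ∀ x ∈ Icc (-(d / 2)) (d / 2),
      HasDerivWithinAt v (v' x) (Icc (-(d / 2)) (d / 2)) x)
    (hv' : ∀ x ∈ Icc (-(d / 2)) (d / 2),
      HasDerivWithinAt v' (v'' x) (Icc (-(d / 2)) (d / 2)) x)
    (hNeu0 : v' (-(d / 2)) = 0) (hNeu1 : v' (d / 2) = 0)
    (hmono : ∀ x ∈ Ioo (-(d / 2)) (d / 2), 0 < v' x)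
    (heq : ∀ x ∈ Ioo (-(d / 2)) (d / 2),
      v'' x - ((n : ℝ) - 1) * modelT K x * v' x = -lam * v x) :
    ∀ s ∈ Ioo (0 : ℝ) 1,
      lam ≥ 4 * s * (1 - s) * Real.pi ^ 2 / d ^ 2 + s * ((n : ℝ) - 1) * K := by
  intro s ⟨hs0, hs1⟩
  by_contra! hlt
  set m : ℝ := (n : ℝ) - 1
  have hm : 0 ≤ m := by
    have : (2 : ℝ) ≤ n := by exact_mod_cast hn
    linarith
  obtain ⟨b, hb, hquad⟩ := exists_quadratic_form_nonpos hm hs0 hs1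
  obtain ⟨k, ⟨hk0, hkd⟩, hk⟩ := exists_lt_of_lt_sq_mul_add (A := 4 * s * (1 - s))
    (B := s * m * K) (by positivity : 0 < π / d) (by rwa [div_pow, ← mul_div_assoc])
  have hcT : IsModelPair K (modelC K) (modelT K) (Icc (-(d / 2)) (d / 2)) :=
    (isModelPair_model K).mono fun x hx hK => abs_mul_lt_pi_div_two (sqrt_nonneg K)
      (by have := hdK hK; rwa [lt_div_iff₀ (sqrt_pos.mpr hK), mul_comm] at this) hx
  have hCS : IsModelPair (k ^ 2) (fun x => cos (k * x)) (fun x => k * tan (k * x))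
      (Icc (-(d / 2)) (d / 2)) :=
    (isModelPair_cos k).mono fun x hx => abs_mul_lt_pi_div_two hk0.le
      ((lt_div_iff₀ hd).mp hkd) hx
  have hnhds : ∀ x ∈ Ioo (-(d / 2)) (d / 2), Icc (-(d / 2)) (d / 2) ∈ nhds x :=
    fun x hx => Icc_mem_nhds hx.1 hx.2
  have hlam := lt_eigenvalue_of_quadratic_form_nonpos (by linarith) hcT hCS
    (fun x hx => (hv x (Ioo_subset_Icc_self hx)).hasDerivAt (hnhds x hx))
    (fun x hx => (hv' x hx).continuousWithinAt)
    (fun x hx => (hv' x (Ioo_subset_Icc_self hx)).hasDerivAt (hnhds x hx))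
    hNeu0 hNeu1 hmono heq hquad
  nlinarith [mul_le_mul_of_nonneg_right hb (sq_nonneg k)]

/-- One-dimensional model statement underlying Corollary 4.3: a monotone Neumann
eigenfunction `v` of `L_{(n-1)K,n} v = v'' - (n-1) T_K v' = -λ v` on `(-d/2, d/2)`
forces `λ ≥ 4 s (1-s) π²/d² + s (n-1) K` for every `s ∈ (0,1)`. -/
theorem stmt_4 (n : ℕ) (hn : 2 ≤ n) (K lam d : ℝ) (hd : 0 < d)
    (hdK : 0 < K → d < Real.pi / Real.sqrt K)
    (v v' v'' v''' : ℝ → ℝ)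
    (hv : ∀ x ∈ Icc (-(d / 2)) (d / 2),
      HasDerivWithinAt v (v' x) (Icc (-(d / 2)) (d / 2)) x)
    (hv' : ∀ x ∈ Icc (-(d / 2)) (d / 2),
      HasDerivWithinAt v' (v'' x) (Icc (-(d / 2)) (d / 2)) x)
    (hv'' : ∀ x ∈ Icc (-(d / 2)) (d / 2),
      HasDerivWithinAt v'' (v''' x) (Icc (-(d / 2)) (d / 2)) x)
    (hv'''cont : ContinuousOn v''' (Icc (-(d / 2)) (d / 2)))
    (hNeu0 : v' (-(d / 2)) = 0) (hNeu1 : v' (d / 2) = 0)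
    (hmono : ∀ x ∈ Ioo (-(d / 2)) (d / 2), 0 < v' x)
    (heq : ∀ x ∈ Ioo (-(d / 2)) (d / 2),
      v'' x - ((n : ℝ) - 1) * modelT K x * v' x = -lam * v x) :
    ∀ s ∈ Ioo (0 : ℝ) 1,
      lam ≥ 4 * s * (1 - s) * Real.pi ^ 2 / d ^ 2 + s * ((n : ℝ) - 1) * K :=
  stmt_4_general n hn K lam d hd hdK v v' v'' hv hv' hNeu0 hNeu1 hmono heq
end

section
/- Let l > 1, λ ∈ ℝ, and a < b be real numbers. Let ρ : ℝ → ℝ be continuous on [a, b), differentiable and strictly positive on (a, b), and satisfy lim_{s → a⁺} (s - a)·ρ'(s)/ρ(s) = l - 1. Let v : ℝ → ℝ be continuous on [a, b) with v(a) = -1, differentiable on (a, b), and suppose that for every s ∈ (a, b), ρ(s)·v'(s) = -λ·∫_a^s ρ(t)·v(t) dt. Then lim_{s → a⁺} v'(s)/(s - a) = λ/l. -/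
/-!
With `F s = ∫_a^s ρ v` the hypothesis reads `v'(s) / (s - a) = -λ F(s) / (ρ(s) (s - a))`.
Numerator and denominator both tend to `0` at `a⁺`, and the quotient of their derivatives is
`ρ v / (ρ' (s - a) + ρ) = v / ((s - a) ρ'/ρ + 1)`, which tends to `-1 / l`; L'Hôpital's rule
concludes.
-/

open Set MeasureTheory Filter Topology

theorem tendsto_div_mul_sub_nhdsGT_of_hasDerivAt {a l r w₀ : ℝ} {ρ ρ' F w : ℝ → ℝ}
    (hl : l ≠ 0)
    (hρ : ∀ᶠ s in 𝓝[>] a, HasDerivAt ρ (ρ' s) s)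
    (hρne : ∀ᶠ s in 𝓝[>] a, ρ s ≠ 0)
    (hρa : Tendsto ρ (𝓝[>] a) (𝓝 r))
    (hρlim : Tendsto (fun s => (s - a) * ρ' s / ρ s) (𝓝[>] a) (𝓝 (l - 1)))
    (hF : ∀ᶠ s in 𝓝[>] a, HasDerivAt F (ρ s * w s) s)
    (hFa : Tendsto F (𝓝[>] a) (𝓝 0))
    (hw : Tendsto w (𝓝[>] a) (𝓝 w₀)) :
    Tendsto (fun s => F s / (ρ s * (s - a))) (𝓝[>] a) (𝓝 (w₀ / l)) := by
  have hq : Tendsto (fun s => (s - a) * ρ' s / ρ s + 1) (𝓝[>] a) (𝓝 l) := by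
    simpa using hρlim.add_const 1
  have hg' : ∀ᶠ s in 𝓝[>] a,
      HasDerivAt (fun s => ρ s * (s - a)) (ρ s * ((s - a) * ρ' s / ρ s + 1)) s := by
    filter_upwards [hρ, hρne] with s hs hs0
    refine (hs.mul ((hasDerivAt_id' s).sub_const a)).congr_deriv ?_
    field_simp
  have hga : Tendsto (fun s => ρ s * (s - a)) (𝓝[>] a) (𝓝 0) := by
    have hsa : Tendsto (fun s => s - a) (𝓝[>] a) (𝓝 0) :=
      tendsto_sub_nhds_zero_iff.mpr nhdsWithin_le_nhds
    simpa using hρa.mul hsa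
  refine HasDerivAt.lhopital_zero_nhdsGT hF hg' ?_ hFa hga ?_
  · filter_upwards [hρne, hq.eventually_ne hl] with s hs hqs using mul_ne_zero hs hqs
  · refine (hw.div hq hl).congr' ?_
    filter_upwards [hρne] with s hs
    rw [Pi.div_apply, mul_div_mul_left _ _ hs]

theorem hasDerivAt_integral_of_continuousOn_Ico {a b : ℝ} {f : ℝ → ℝ}
    (hf : ContinuousOn f (Ico a b)) {s : ℝ} (hs : s ∈ Ioo a b) :
    HasDerivAt (fun u => ∫ t in a..u, f t) (f s) s := by
  have hfIoo : ContinuousOn f (Ioo a b) := hf.mono Ioo_subset_Ico_self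
  refine intervalIntegral.integral_hasDerivAt_right ?_
    (hfIoo.stronglyMeasurableAtFilter isOpen_Ioo s hs)
    (hfIoo.continuousAt (Ioo_mem_nhds hs.1 hs.2))
  exact (hf.mono fun t ht => ⟨ht.1, ht.2.trans_lt hs.2⟩).intervalIntegrable_of_Icc hs.1.le

theorem tendsto_integral_nhdsGT_of_continuousOn_Ico {a b : ℝ} {f : ℝ → ℝ} (hab : a < b)
    (hf : ContinuousOn f (Ico a b)) :
    Tendsto (fun u => ∫ t in a..u, f t) (𝓝[>] a) (𝓝 0) := by
  obtain ⟨c, hac, hcb⟩ := exists_between hab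
  have hprim : ContinuousOn (fun u => ∫ t in a..u, f t) (Icc a c) := by
    rw [← uIcc_of_le hac.le]
    refine intervalIntegral.continuousOn_primitive_interval ?_
    rw [uIcc_of_le hac.le]
    exact (hf.mono fun t ht => ⟨ht.1, ht.2.trans_lt hcb⟩).integrableOn_compact isCompact_Icc
  have := ((hprim a (left_mem_Icc.mpr hac.le)).mono Ioo_subset_Icc_self).tendsto
  rwa [nhdsWithin_Ioo_eq_nhdsGT hac, intervalIntegral.integral_same] at this

theorem stmt_6_general (l lam a b : ℝ) (hl : 1 < l) (hab : a < b)
    (ρ ρ' v v' : ℝ → ℝ)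
    (hρcont : ContinuousOn ρ (Ico a b))
    (hρ : ∀ s ∈ Ioo a b, HasDerivAt ρ (ρ' s) s)
    (hρpos : ∀ s ∈ Ioo a b, 0 < ρ s)
    (hρlim : Filter.Tendsto (fun s => (s - a) * ρ' s / ρ s)
      (nhdsWithin a (Ioi a)) (nhds (l - 1)))
    (hvcont : ContinuousOn v (Ico a b))
    (hva : v a = -1)
    (heq : ∀ s ∈ Ioo a b, ρ s * v' s = -lam * ∫ t in a..s, ρ t * v t) :
    Filter.Tendsto (fun s => v' s / (s - a)) (nhdsWithin a (Ioi a))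
      (nhds (lam / l)) := by
  have hnear : ∀ᶠ s in 𝓝[>] a, s ∈ Ioo a b := Ioo_mem_nhdsGT hab
  have hright_limit {f : ℝ → ℝ} (hf : ContinuousOn f (Ico a b)) :
      Tendsto f (𝓝[>] a) (𝓝 (f a)) :=
    ((hf a (left_mem_Ico.mpr hab)).mono Ioo_subset_Ico_self).tendsto.mono_left
      (nhdsWithin_Ioo_eq_nhdsGT hab).ge
  have hρv := hρcont.mul hvcont
  have hquot : Tendsto (fun s => (∫ t in a..s, ρ t * v t) / (ρ s * (s - a))) (𝓝[>] a)
      (𝓝 (-1 / l)) := by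
    refine tendsto_div_mul_sub_nhdsGT_of_hasDerivAt (by linarith)
      (hnear.mono hρ) (hnear.mono fun s hs => (hρpos s hs).ne') (hright_limit hρcont) hρlim
      (hnear.mono fun s hs => hasDerivAt_integral_of_continuousOn_Ico hρv hs)
      (tendsto_integral_nhdsGT_of_continuousOn_Ico hab hρv) ?_
    simpa [hva] using hright_limit hvcont
  have hlim := hquot.const_mul (-lam)
  rw [show -lam * (-1 / l) = lam / l by ring] at hlim
  refine hlim.congr' ?_
  filter_upwards [hnear] with s hs
  rw [mul_div_assoc', ← heq s hs, mul_div_mul_left _ _ (hρpos s hs).ne']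

/-- L'Hôpital-type limit from the proof of Theorem 3.3: if `ρ v' (s) = -λ ∫_a^s ρ v`
with `v(a) = -1`, `ρ > 0` on `(a,b)` and `(s-a)ρ'(s)/ρ(s) → l-1` as `s → a⁺`,
then `v'(s)/(s-a) → λ/l` as `s → a⁺`. -/
theorem stmt_6 (l lam a b : ℝ) (hl : 1 < l) (hab : a < b)
    (ρ ρ' v v' : ℝ → ℝ)
    (hρcont : ContinuousOn ρ (Ico a b))
    (hρ : ∀ s ∈ Ioo a b, HasDerivAt ρ (ρ' s) s)
    (hρpos : ∀ s ∈ Ioo a b, 0 < ρ s)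
    (hρlim : Filter.Tendsto (fun s => (s - a) * ρ' s / ρ s)
      (nhdsWithin a (Ioi a)) (nhds (l - 1)))
    (hvcont : ContinuousOn v (Ico a b))
    (hva : v a = -1)
    (hv : ∀ s ∈ Ioo a b, HasDerivAt v (v' s) s)
    (heq : ∀ s ∈ Ioo a b, ρ s * v' s = -lam * ∫ t in a..s, ρ t * v t) :
    Filter.Tendsto (fun s => v' s / (s - a)) (nhdsWithin a (Ioi a))
      (nhds (lam / l)) :=
  stmt_6_general l lam a b hl hab ρ ρ' v v' hρcont hρ hρpos hρlim hvcont hva heq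
end

section
/- Let c ≥ 0 and T > 0, and let φ : ℝ → ℝ be differentiable on [0, T] with φ'(s) ≥ c·φ(s)² for all s ∈ [0, T]. Then for all s₁, s₂ with 0 ≤ s₁ ≤ s₂ ≤ T, one has φ(s₂) - φ(s₁) ≥ c·(s₂ - s₁)·φ(s₁)·φ(s₂). -/
/-!
Since `φ' ≥ c φ² ≥ 0`, `φ` is nondecreasing. If `φ(s₁)` and `φ(s₂)` have the same strict sign,
then `φ` does not vanish on `[s₁, s₂]`, and there `(-1/φ)' = φ'/φ² ≥ c`; integrating gives
`1/φ(s₁) - 1/φ(s₂) ≥ c (s₂ - s₁)`, which is the claim after multiplying by `φ(s₁) φ(s₂) > 0`.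
Otherwise `φ(s₁) φ(s₂) ≤ 0`, and the claim follows from monotonicity alone.
-/

open Set

theorem monotoneOn_of_forall_hasDerivWithinAt_nonneg {D : Set ℝ} (hD : Convex ℝ D)
    {f f' : ℝ → ℝ} (hf : ∀ x ∈ D, HasDerivWithinAt f (f' x) D x) (hf'₀ : ∀ x ∈ D, 0 ≤ f' x) :
    MonotoneOn f D :=
  monotoneOn_of_hasDerivWithinAt_nonneg hD (fun x hx ↦ (hf x hx).continuousWithinAt)
    (fun x hx ↦ (hf x (interior_subset hx)).mono interior_subset)
    (fun x hx ↦ hf'₀ x (interior_subset hx))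

theorem monotoneOn_neg_inv_sub_mul_of_mul_sq_le_deriv {D : Set ℝ} (hD : Convex ℝ D) (c : ℝ)
    {φ φ' : ℝ → ℝ} (hφ : ∀ s ∈ D, HasDerivWithinAt φ (φ' s) D s)
    (hineq : ∀ s ∈ D, c * φ s ^ 2 ≤ φ' s) (hne : ∀ s ∈ D, φ s ≠ 0) :
    MonotoneOn (fun s ↦ -(φ s)⁻¹ - c * s) D := by
  refine monotoneOn_of_forall_hasDerivWithinAt_nonneg hD (f' := fun s ↦ φ' s / φ s ^ 2 - c)
    (fun s hs ↦ ?_) (fun s hs ↦ ?_)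
  · have h := ((hφ s hs).inv (hne s hs)).neg.sub ((hasDerivWithinAt_id s D).const_mul c)
    exact h.congr_deriv (by ring)
  · rw [sub_nonneg, le_div_iff₀ (pow_two_pos_of_ne_zero (hne s hs))]
    exact hineq s hs

theorem mul_mul_le_sub_of_le_inv_sub_inv {k x y : ℝ} (hxy : 0 < x * y) (h : k ≤ x⁻¹ - y⁻¹) :
    k * x * y ≤ y - x := by
  rw [inv_sub_inv (left_ne_zero_of_mul hxy.ne') (right_ne_zero_of_mul hxy.ne'),
    le_div_iff₀ hxy] at h
  linarith [mul_assoc k x y]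

theorem mul_sub_mul_mul_le_sub_of_mul_sq_le_deriv {D : Set ℝ} (hD : Convex ℝ D) {c : ℝ}
    (hc : 0 ≤ c) {φ φ' : ℝ → ℝ} (hφ : ∀ s ∈ D, HasDerivWithinAt φ (φ' s) D s)
    (hineq : ∀ s ∈ D, c * φ s ^ 2 ≤ φ' s) {s₁ s₂ : ℝ} (h₁ : s₁ ∈ D) (h₂ : s₂ ∈ D)
    (h₁₂ : s₁ ≤ s₂) :
    c * (s₂ - s₁) * φ s₁ * φ s₂ ≤ φ s₂ - φ s₁ := by
  have hmono : MonotoneOn φ D := monotoneOn_of_forall_hasDerivWithinAt_nonneg hD hφ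
    fun s hs ↦ (mul_nonneg hc (sq_nonneg _)).trans (hineq s hs)
  by_cases hsign : 0 < φ s₁ * φ s₂
  · have hsub : Icc s₁ s₂ ⊆ D := hD.ordConnected.out h₁ h₂
    have hne : ∀ s ∈ Icc s₁ s₂, φ s ≠ 0 := by
      intro s hs hs0
      have := hmono h₁ (hsub hs) hs.1
      have := hmono (hsub hs) h₂ hs.2
      nlinarith
    have hinv := monotoneOn_neg_inv_sub_mul_of_mul_sq_le_deriv (convex_Icc s₁ s₂) c
      (fun s hs ↦ (hφ s (hsub hs)).mono hsub) (fun s hs ↦ hineq s (hsub hs)) hne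
      (left_mem_Icc.2 h₁₂) (right_mem_Icc.2 h₁₂) h₁₂
    exact mul_mul_le_sub_of_le_inv_sub_inv hsign (by simp only at hinv; linarith)
  · have hcs : 0 ≤ c * (s₂ - s₁) := mul_nonneg hc (sub_nonneg.2 h₁₂)
    have := hmono h₁ h₂ h₁₂
    nlinarith

theorem stmt_7_general (c T : ℝ) (hc : 0 ≤ c) (φ φ' : ℝ → ℝ)
    (hφ : ∀ s ∈ Icc (0 : ℝ) T, HasDerivWithinAt φ (φ' s) (Icc (0 : ℝ) T) s)
    (hineq : ∀ s ∈ Icc (0 : ℝ) T, φ' s ≥ c * (φ s) ^ 2) :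
    ∀ s₁ s₂ : ℝ, 0 ≤ s₁ → s₁ ≤ s₂ → s₂ ≤ T →
      φ s₂ - φ s₁ ≥ c * (s₂ - s₁) * φ s₁ * φ s₂ :=
  fun _ _ h₀₁ h₁₂ h₂T ↦ mul_sub_mul_mul_le_sub_of_mul_sq_le_deriv (convex_Icc 0 T) hc hφ hineq
    ⟨h₀₁, h₁₂.trans h₂T⟩ ⟨h₀₁.trans h₁₂, h₂T⟩ h₁₂

/-- Differential-inequality comparison lemma (inequality (5.7) in the proof of
Theorem 1.4): if `φ' ≥ c φ²` on `[0, T]` then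
`φ(s₂) - φ(s₁) ≥ c (s₂ - s₁) φ(s₁) φ(s₂)` for `0 ≤ s₁ ≤ s₂ ≤ T`. -/
theorem stmt_7 (c T : ℝ) (hc : 0 ≤ c) (hT : 0 < T) (φ φ' : ℝ → ℝ)
    (hφ : ∀ s ∈ Icc (0 : ℝ) T, HasDerivWithinAt φ (φ' s) (Icc (0 : ℝ) T) s)
    (hineq : ∀ s ∈ Icc (0 : ℝ) T, φ' s ≥ c * (φ s) ^ 2) :
    ∀ s₁ s₂ : ℝ, 0 ≤ s₁ → s₁ ≤ s₂ → s₂ ≤ T →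
      φ s₂ - φ s₁ ≥ c * (s₂ - s₁) * φ s₁ * φ s₂ :=
  stmt_7_general c T hc φ φ' hφ hineq
end

section
/- Let n be a positive integer and let w : (EuclideanSpace ℝ (Fin n)) × ℝ → ℝ be continuously differentiable on ℝⁿ × (0, ∞), and suppose that for all x ∈ ℝⁿ and all t > 0, ‖∇_x w(x,t)‖² - ∂_t w(x,t) ≤ n/(2t), where ∇_x w(x,t) denotes the gradient of w(·,t) at x. Then for all x₁, x₂ ∈ ℝⁿ and all 0 < t₁ < t₂, one has w(x₁, t₁) ≤ w(x₂, t₂) + (n/2)·log(t₂/t₁) + ‖x₁ - x₂‖²/(4(t₂ - t₁)). -/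
open Set Real
open scoped RealInnerProductSpace

/-!
Along the straight space-time segment `s ↦ (a + s • m, s)` joining `(x₁, t₁)` to `(x₂, t₂)`,
the Li–Yau bound `‖∇w‖² - ∂ₜw ≤ κ / t` together with `-⟪∇w, m⟫ ≤ ‖∇w‖² + ‖m‖² / 4` shows that
`s ↦ w (a + s • m, s) + κ log s + ‖m‖² s / 4` is nondecreasing. Comparing its values at `t₁` and
`t₂`, with `m = (x₂ - x₁) / (t₂ - t₁)`, gives the Harnack inequality.
-/

section

variable {E : Type*} [NormedAddCommGroup E] [InnerProductSpace ℝ E]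

theorem neg_real_inner_le_norm_sq_add_norm_sq_div_four (G m : E) :
    -⟪G, m⟫ ≤ ‖G‖ ^ 2 + ‖m‖ ^ 2 / 4 := by
  have h := norm_add_sq_real G ((1 / 2 : ℝ) • m)
  rw [real_inner_smul_right, norm_smul, Real.norm_of_nonneg (by norm_num)] at h
  nlinarith [sq_nonneg ‖G + (1 / 2 : ℝ) • m‖]

variable [CompleteSpace E]

theorem DifferentiableAt.hasDerivAt_comp_line {w : E × ℝ → ℝ} {a m : E} {t : ℝ}
    (hw : DifferentiableAt ℝ w (a + t • m, t)) :
    HasDerivAt (fun s => w (a + s • m, s))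
      (⟪gradient (fun y => w (y, t)) (a + t • m), m⟫ +
        deriv (fun s => w (a + t • m, s)) t) t := by
  set p := a + t • m
  have hline : HasDerivAt (fun s : ℝ => (a + s • m, s)) (m, 1) t :=
    (((hasDerivAt_id t).smul_const m).const_add a).prodMk (hasDerivAt_id t) |>.congr_deriv
      (by simp)
  have hspace : HasFDerivAt (fun y => w (y, t))
      ((fderiv ℝ w (p, t)).comp (ContinuousLinearMap.inl ℝ E ℝ)) p :=
    hw.hasFDerivAt.comp p (hasFDerivAt_prodMk_left p t)
  have htime : HasDerivAt (fun s => w (p, s)) (fderiv ℝ w (p, t) (0, 1)) t :=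
    hw.hasFDerivAt.comp_hasDerivAt t ((hasDerivAt_const t p).prodMk (hasDerivAt_id t))
  refine (hw.hasFDerivAt.comp_hasDerivAt_of_eq t hline rfl).congr_deriv ?_
  rw [gradient, hspace.fderiv, InnerProductSpace.toDual_symm_apply, htime.deriv,
    ContinuousLinearMap.comp_apply, ContinuousLinearMap.inl_apply, ← map_add]
  simp

variable {w : E × ℝ → ℝ} {κ : ℝ}

theorem monotoneOn_comp_line_add_log_of_liYau
    (hw : ∀ x t, 0 < t → DifferentiableAt ℝ w (x, t))
    (hLY : ∀ x t, 0 < t →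
      ‖gradient (fun y => w (y, t)) x‖ ^ 2 - deriv (fun τ => w (x, τ)) t ≤ κ / t)
    (a m : E) :
    MonotoneOn (fun s => w (a + s • m, s) + κ * log s + ‖m‖ ^ 2 / 4 * s) (Ioi 0) := by
  have hderiv : ∀ s ∈ Ioi (0 : ℝ), HasDerivAt
      (fun s => w (a + s • m, s) + κ * log s + ‖m‖ ^ 2 / 4 * s)
      (⟪gradient (fun y => w (y, s)) (a + s • m), m⟫ +
        deriv (fun τ => w (a + s • m, τ)) s + κ * s⁻¹ + ‖m‖ ^ 2 / 4) s := fun s hs =>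
    (((hw _ s hs).hasDerivAt_comp_line.add ((hasDerivAt_log (ne_of_gt hs)).const_mul κ)).add
      ((hasDerivAt_id s).const_mul _)).congr_deriv (by simp)
  refine monotoneOn_of_hasDerivWithinAt_nonneg (convex_Ioi 0)
    (fun s hs => (hderiv s hs).continuousAt.continuousWithinAt)
    (fun s hs => (hderiv s (interior_subset hs)).hasDerivWithinAt) fun s hs => ?_
  rw [interior_Ioi] at hs
  have hLYs := hLY (a + s • m) s hs
  have hCS := neg_real_inner_le_norm_sq_add_norm_sq_div_four
    (gradient (fun y => w (y, s)) (a + s • m)) m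
  rw [div_eq_mul_inv] at hLYs
  linarith

theorem harnack_of_liYau
    (hw : ∀ x t, 0 < t → DifferentiableAt ℝ w (x, t))
    (hLY : ∀ x t, 0 < t →
      ‖gradient (fun y => w (y, t)) x‖ ^ 2 - deriv (fun τ => w (x, τ)) t ≤ κ / t)
    {x₁ x₂ : E} {t₁ t₂ : ℝ} (ht₁ : 0 < t₁) (h12 : t₁ < t₂) :
    w (x₁, t₁) ≤ w (x₂, t₂) + κ * log (t₂ / t₁) + ‖x₁ - x₂‖ ^ 2 / (4 * (t₂ - t₁)) := by
  have hT : t₂ - t₁ ≠ 0 := (sub_pos.mpr h12).ne'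
  set m := (t₂ - t₁)⁻¹ • (x₂ - x₁)
  have hmono := monotoneOn_comp_line_add_log_of_liYau hw hLY (x₂ - t₂ • m) m ht₁
    (ht₁.trans h12) h12.le
  have hx₁ : x₂ - t₂ • m + t₁ • m = x₁ := by
    rw [sub_add, ← sub_smul, smul_inv_smul₀ hT, sub_sub_cancel]
  have hm : ‖m‖ ^ 2 / 4 * t₂ - ‖m‖ ^ 2 / 4 * t₁ = ‖x₁ - x₂‖ ^ 2 / (4 * (t₂ - t₁)) := by
    rw [norm_smul, norm_inv, norm_sub_rev x₂, Real.norm_of_nonneg (sub_pos.mpr h12).le]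
    field_simp
  simp only [hx₁, sub_add_cancel] at hmono
  rw [log_div (ht₁.trans h12).ne' ht₁.ne', ← hm]
  linarith

end

theorem stmt_9_general (n : ℕ)
    (w : EuclideanSpace ℝ (Fin n) × ℝ → ℝ)
    (hw : ContDiffOn ℝ 1 w ((Set.univ : Set (EuclideanSpace ℝ (Fin n))) ×ˢ
      Set.Ioi (0 : ℝ)))
    (hLY : ∀ (x : EuclideanSpace ℝ (Fin n)) (t : ℝ), 0 < t →
      ‖gradient (fun y => w (y, t)) x‖ ^ 2 - deriv (fun τ => w (x, τ)) t ≤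
        (n : ℝ) / (2 * t)) :
    ∀ (x₁ x₂ : EuclideanSpace ℝ (Fin n)) (t₁ t₂ : ℝ), 0 < t₁ → t₁ < t₂ →
      w (x₁, t₁) ≤ w (x₂, t₂) + ((n : ℝ) / 2) * Real.log (t₂ / t₁) +
        ‖x₁ - x₂‖ ^ 2 / (4 * (t₂ - t₁)) := by
  intro x₁ x₂ t₁ t₂ ht₁ h12
  have hdiff : ∀ x t, 0 < t → DifferentiableAt ℝ w (x, t) := fun x t ht =>
    (hw.contDiffAt ((isOpen_univ.prod isOpen_Ioi).mem_nhds
      (mk_mem_prod (mem_univ x) ht))).differentiableAt one_ne_zero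
  refine harnack_of_liYau hdiff (fun x t ht => ?_) ht₁ h12
  rw [div_div]
  exact hLY x t ht

/-- Path-integration step deducing the parabolic Harnack inequality
(Corollary 5.4) from the Li–Yau gradient estimate (Theorem 1.4), stated on
Euclidean space: if `w` (playing the role of `log u`) satisfies
`‖∇_x w‖² - ∂_t w ≤ n/(2t)` for all `t > 0`, then
`w(x₁,t₁) ≤ w(x₂,t₂) + (n/2) log(t₂/t₁) + ‖x₁-x₂‖²/(4(t₂-t₁))`. -/
theorem stmt_9 (n : ℕ) (hn : 0 < n)
    (w : EuclideanSpace ℝ (Fin n) × ℝ → ℝ)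
    (hw : ContDiffOn ℝ 1 w ((Set.univ : Set (EuclideanSpace ℝ (Fin n))) ×ˢ
      Set.Ioi (0 : ℝ)))
    (hLY : ∀ (x : EuclideanSpace ℝ (Fin n)) (t : ℝ), 0 < t →
      ‖gradient (fun y => w (y, t)) x‖ ^ 2 - deriv (fun τ => w (x, τ)) t ≤
        (n : ℝ) / (2 * t)) :
    ∀ (x₁ x₂ : EuclideanSpace ℝ (Fin n)) (t₁ t₂ : ℝ), 0 < t₁ → t₁ < t₂ →
      w (x₁, t₁) ≤ w (x₂, t₂) + ((n : ℝ) / 2) * Real.log (t₂ / t₁) +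
        ‖x₁ - x₂‖ ^ 2 / (4 * (t₂ - t₁)) :=
  stmt_9_general n w hw hLY
end
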